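/- arXiv:2408.08856 — 6 statements merged into one kernel-verified Lean document; each statement's English description precedes it below -/
import Mathlib

section
/- The polynomial 1 + x + x^2 + ... + x^{k-1} - x^k (for k ≥ 2) has exactly one real root in the interval (1,2). -/
/-!
Dividing by `x ^ k`, a positive root `x` of `1 + x + ⋯ + x ^ (k - 1) - x ^ k` is exactly a
solution of `x⁻¹ + x⁻² + ⋯ + x⁻ᵏ = 1`, whose left side is strictly decreasing on `(0, ∞)`; so
there is at most one positive root. The polynomial takes the value `k - 1 > 0` at `1` and `-1`
at `2`, so the intermediate value theorem gives a root in `(1, 2)`.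
-/

open Finset Set

lemma sum_range_pow_sub_pow_eq_mul {K : Type*} [Field K] (k : ℕ) {x : K} (hx : x ≠ 0) :
    (∑ i ∈ range k, x ^ i) - x ^ k = x ^ k * ((∑ i ∈ range k, x⁻¹ ^ (i + 1)) - 1) := by
  rw [mul_sub, mul_one, mul_sum, ← sum_range_reflect]
  congr 1
  refine sum_congr rfl fun i hi => ?_
  have hik : k - 1 - i + (i + 1) = k := by have := mem_range.mp hi; omega
  rw [inv_pow, ← div_eq_mul_inv, eq_div_iff (pow_ne_zero _ hx), ← pow_add, hik]

lemma strictAntiOn_sum_range_inv_pow {K : Type*} [Field K] [LinearOrder K]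
    [IsStrictOrderedRing K] {k : ℕ} (hk : k ≠ 0) :
    StrictAntiOn (fun x : K => ∑ i ∈ range k, x⁻¹ ^ (i + 1)) (Ioi 0) :=
  fun _ ha _ _ hab => sum_lt_sum_of_nonempty (nonempty_range_iff.mpr hk) fun _ _ =>
    pow_lt_pow_left₀ (inv_strictAntiOn ha (mem_Ioi.mpr (ha.trans hab)) hab)
      (inv_nonneg.mpr (ha.trans hab).le) (Nat.succ_ne_zero _)

lemma subsingleton_pos_roots_sum_range_pow_sub_pow {K : Type*} [Field K] [LinearOrder K] [IsStrictOrderedRing K]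
    {k : ℕ} (hk : k ≠ 0) :
    {x : K | 0 < x ∧ (∑ i ∈ range k, x ^ i) - x ^ k = 0}.Subsingleton := by
  have sum_inv_pow_eq_one {x : K} (hx : 0 < x) (hroot : (∑ i ∈ range k, x ^ i) - x ^ k = 0) :
      ∑ i ∈ range k, x⁻¹ ^ (i + 1) = 1 := by
    rw [sum_range_pow_sub_pow_eq_mul k hx.ne', mul_eq_zero] at hroot
    exact sub_eq_zero.mp (hroot.resolve_left (pow_ne_zero _ hx.ne'))
  rintro x ⟨hx, hxroot⟩ y ⟨hy, hyroot⟩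
  exact (strictAntiOn_sum_range_inv_pow hk).injOn hx hy
    ((sum_inv_pow_eq_one hx hxroot).trans (sum_inv_pow_eq_one hy hyroot).symm)

lemma exists_mem_Ioo_one_two_sum_range_pow_sub_pow_eq_zero {k : ℕ} (hk : 2 ≤ k) :
    ∃ x ∈ Ioo (1 : ℝ) 2, (∑ i ∈ range k, x ^ i) - x ^ k = 0 := by
  have hcont : ContinuousOn (fun x : ℝ => (∑ i ∈ range k, x ^ i) - x ^ k) (Icc 1 2) := by
    fun_prop
  have hsign : (0 : ℝ) ∈
      Ioo ((∑ i ∈ range k, (2 : ℝ) ^ i) - 2 ^ k) ((∑ i ∈ range k, 1 ^ i) - 1 ^ k) := by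
    have hk' : (2 : ℝ) ≤ k := by exact_mod_cast hk
    rw [geom_sum_eq (by norm_num : (2 : ℝ) ≠ 1)]
    simp only [one_pow, sum_const, card_range, nsmul_eq_mul, mul_one]
    constructor <;> linarith
  exact intermediate_value_Ioo' (by norm_num) hcont hsign

/-- The polynomial `1 + x + x^2 + ... + x^{k-1} - x^k` (for `k ≥ 2`) has exactly one
real root in the interval `(1,2)`. -/
theorem knacci_unique_root_Ioo (k : ℕ) (hk : 2 ≤ k) :
    ∃! x : ℝ, x ∈ Set.Ioo (1 : ℝ) 2 ∧ (∑ i ∈ Finset.range k, x ^ i) - x ^ k = 0 := by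
  obtain ⟨x, hx, hroot⟩ := exists_mem_Ioo_one_two_sum_range_pow_sub_pow_eq_zero hk
  refine ⟨x, ⟨hx, hroot⟩, fun y ⟨hy, hyroot⟩ => ?_⟩
  exact subsingleton_pos_roots_sum_range_pow_sub_pow (by omega) ⟨zero_lt_one.trans hy.1, hyroot⟩
    ⟨zero_lt_one.trans hx.1, hroot⟩
end

section
/- The sequence a_i defined by a_i = ∑_{j=0}^{i} F_k(k-1+j) satisfies the recurrence a_{n+k} = a_n + a_{n+1} + ... + a_{n+k-1} + 1 with initial conditions a_i = 2^i for 0 ≤ i ≤ k-1. -/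
/-!
Write `S n = ∑_{j<n} F j`. Since `F` vanishes below `k - 1`, the partial sum `a_i` of the
statement is `S (i + k)`. Summing the recurrence `F (m + k) = ∑_{i<k} F (m + i)` over `m` shows that
`S (m + k) - ∑_{i<k} S (m + i)` does not depend on `m`; at `m = 0` it is `S k = 1`. For `m < k`
the recurrence reads `F (m + k) = S (m + k)`, so `S` doubles from `S k = 1` up to `S (2k - 1)`.
-/

open Finset

section PrefixSums

variable {M : Type*} [AddCommMonoid M] {k : ℕ} {F : ℕ → M}

theorem sum_range_comp_add_eq_of_forall_lt_eq_zero {p : ℕ} (hF : ∀ i < p, F i = 0) (n : ℕ) :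
    ∑ j ∈ range n, F (p + j) = ∑ j ∈ range (p + n), F j := by
  rw [sum_range_add, sum_eq_zero fun i hi ↦ hF i (mem_range.1 hi), zero_add]

variable (hF : ∀ n, F (n + k) = ∑ j ∈ range k, F (n + j))
include hF

theorem sum_range_add_add_sum_sum_range_eq (m : ℕ) :
    ∑ j ∈ range (m + k), F j + ∑ i ∈ range k, ∑ j ∈ range i, F j =
      ∑ i ∈ range k, ∑ j ∈ range (m + i), F j + ∑ j ∈ range k, F j := by
  induction m with
  | zero =>
    simp only [zero_add]
    exact add_comm _ _
  | succ m ih =>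
    have hstep : ∀ i, ∑ j ∈ range (m + 1 + i), F j = ∑ j ∈ range (m + i), F j + F (m + i) := by
      intro i
      rw [Nat.add_right_comm, sum_range_succ]
    simp only [hstep, sum_add_distrib, ← hF]
    rw [add_right_comm, ih, add_right_comm]

theorem sum_range_add_succ_add_sum_range_eq (n : ℕ) :
    ∑ j ∈ range (n + k + 1), F j + ∑ j ∈ range n, F j =
      ∑ j ∈ range (n + k), F j + ∑ j ∈ range (n + k), F j := by
  rw [sum_range_succ, hF, add_assoc, add_comm (∑ j ∈ range k, _), ← sum_range_add]

end PrefixSums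

section Knacci

variable {k : ℕ} {F : ℕ → ℕ} (hF0 : ∀ i, i < k - 1 → F i = 0)
include hF0

theorem knacci_sum_range_eq_zero {n : ℕ} (hn : n ≤ k - 1) : ∑ j ∈ range n, F j = 0 :=
  sum_eq_zero fun i hi ↦ hF0 i ((mem_range.1 hi).trans_le hn)

variable (hk : 0 < k) (hF1 : F (k - 1) = 1)
include hk hF1

theorem knacci_sum_range_order : ∑ j ∈ range k, F j = 1 := by
  rw [← Nat.sub_add_cancel hk, sum_range_succ, knacci_sum_range_eq_zero hF0 le_rfl, hF1]

variable (hFrec : ∀ n, F (n + k) = ∑ j ∈ range k, F (n + j))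
include hFrec

theorem knacci_sum_range_add_order_eq_two_pow {i : ℕ} (hi : i ≤ k - 1) :
    ∑ j ∈ range (i + k), F j = 2 ^ i := by
  induction i with
  | zero => rw [zero_add, knacci_sum_range_order hF0 hk hF1, pow_zero]
  | succ i ih =>
    have hdouble := sum_range_add_succ_add_sum_range_eq hFrec i
    rw [knacci_sum_range_eq_zero hF0 (n := i) (by omega), add_zero, ih (by omega), ← two_mul,
      ← pow_succ', Nat.add_right_comm] at hdouble
    exact hdouble

theorem knacci_sum_range_add_order_eq (m : ℕ) :
    ∑ j ∈ range (m + k), F j = ∑ i ∈ range k, ∑ j ∈ range (m + i), F j + 1 := by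
  have h := sum_range_add_add_sum_sum_range_eq hFrec m
  have hS : ∀ i ∈ range k, ∑ j ∈ range i, F j = 0 := fun i hi ↦
    knacci_sum_range_eq_zero hF0 (Nat.le_sub_one_of_lt (mem_range.1 hi))
  rwa [sum_eq_zero hS, add_zero, knacci_sum_range_order hF0 hk hF1] at h

end Knacci

/-- The sequence `a i = ∑_{j=0}^{i} F_k(k-1+j)` satisfies the recurrence
`a_{n+k} = a_n + ... + a_{n+k-1} + 1` with initial conditions `a_i = 2^i` for
`0 ≤ i ≤ k-1`, where `F_k` is the k-nacci sequence. -/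
theorem knacci_partial_sum_recurrence (k : ℕ) (hk : 2 ≤ k) (F : ℕ → ℕ)
    (hF0 : ∀ i, i < k - 1 → F i = 0) (hF1 : F (k - 1) = 1)
    (hFrec : ∀ n, F (n + k) = ∑ j ∈ Finset.range k, F (n + j)) :
    (∀ i, i ≤ k - 1 → (∑ j ∈ Finset.range (i + 1), F (k - 1 + j)) = 2 ^ i) ∧
    (∀ n, (∑ j ∈ Finset.range (n + k + 1), F (k - 1 + j)) =
      (∑ i ∈ Finset.range k, ∑ j ∈ Finset.range (n + i + 1), F (k - 1 + j)) + 1) := by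
  have hk_pos : 0 < k := by omega
  have ha : ∀ i, ∑ j ∈ range (i + 1), F (k - 1 + j) = ∑ j ∈ range (i + k), F j := fun i ↦ by
    rw [sum_range_comp_add_eq_of_forall_lt_eq_zero hF0]
    congr 2
    omega
  refine ⟨fun i hi ↦ ?_, fun n ↦ ?_⟩
  · rw [ha, knacci_sum_range_add_order_eq_two_pow hF0 hk_pos hF1 hFrec hi]
  · simp only [ha, Nat.add_right_comm n _ k]
    exact knacci_sum_range_add_order_eq hF0 hk_pos hF1 hFrec (n + k)
end

section
/- With S_ℓ(n) = ∑_{j=0}^{ℓ} F_k(n+k-2-j), the identity ∑_{j=1}^{k} S_{k-j}(n) · F_k(k-j+i) = F_k(n+i+k-1) holds for all n ≥ k and i ≥ 0. -/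
/-!
Read with the index reversed, the identity says
`F(m + i + k) = ∑_{j<k} (F(m+k-1) + F(m+k-2) + ⋯ + F(m+k-1-j)) · F(j + i)` with `m = n - 1`.
This is proved by induction on `m`. At `m = 0` every window sums to `F(k-1) = 1` and the identity
is the recurrence. Raising `m` by one adds `F(m+k)` to each window and shifts the windows by one
place. The longest old window sums to `F(m+k)` again, so the extra terms recombine through the
recurrence in `i`.
-/

open Finset

section

variable {R : Type*} [Semiring R] {k : ℕ} {F : ℕ → R}

/-- `F a + F (a - 1) + ⋯ + F (a - l + 1)`; every use has `l ≤ a + 1`, so `a - j` never truncates. -/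
def downSum (F : ℕ → R) (a l : ℕ) : R := ∑ j ∈ range l, F (a - j)

@[simp]
lemma downSum_zero (F : ℕ → R) (a : ℕ) : downSum F a 0 = 0 := rfl

lemma downSum_succ_succ (F : ℕ → R) (a l : ℕ) :
    downSum F (a + 1) (l + 1) = F (a + 1) + downSum F a l := by
  simp only [downSum, sum_range_succ', Nat.sub_zero, Nat.add_sub_add_right]
  exact add_comm _ _

lemma downSum_initial (hF0 : ∀ i, i < k - 1 → F i = 0) (hF1 : F (k - 1) = 1) {j : ℕ}
    (hj : j < k) : downSum F (k - 1) (j + 1) = 1 := by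
  rw [downSum, sum_range_succ', sum_eq_zero fun s hs => hF0 _ (by have := mem_range.mp hs; omega),
    Nat.sub_zero, hF1, zero_add]

lemma downSum_eq_of_recurrence (hrec : ∀ n, F (n + k) = ∑ j ∈ range k, F (n + j)) (m : ℕ) :
    downSum F (m + k - 1) k = F (m + k) := by
  rw [hrec, downSum, ← sum_range_reflect]
  exact sum_congr rfl fun j hj => by have := mem_range.mp hj; congr 1; omega

theorem apply_add_add_eq_sum_downSum_mul (hF0 : ∀ i, i < k - 1 → F i = 0)
    (hF1 : F (k - 1) = 1) (hrec : ∀ n, F (n + k) = ∑ j ∈ range k, F (n + j)) (m i : ℕ) :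
    ∑ j ∈ range k, downSum F (m + k - 1) (j + 1) * F (j + i) = F (m + i + k) := by
  induction m generalizing i with
  | zero =>
    rw [Nat.zero_add, Nat.zero_add, hrec]
    refine sum_congr rfl fun j hj => ?_
    rw [downSum_initial hF0 hF1 (mem_range.mp hj), one_mul, add_comm]
  | succ m ih =>
    obtain _ | K := k
    · simpa using (hrec (m + 1 + i)).symm
    rw [show m + (K + 1) - 1 = m + K by omega] at ih
    have hwindow : ∀ j, downSum F (m + 1 + (K + 1) - 1) (j + 1)
        = F (m + (K + 1)) + downSum F (m + K) j := fun j => by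
      rw [show m + 1 + (K + 1) - 1 = m + K + 1 by omega, downSum_succ_succ, add_assoc]
    have hlongest : downSum F (m + K) (K + 1) = F (m + (K + 1)) := by
      simpa using downSum_eq_of_recurrence hrec m
    have hnext := ih (i + 1)
    rw [sum_range_succ, hlongest, show K + (i + 1) = i + (K + 1) by omega, hrec i,
      show m + (i + 1) + (K + 1) = m + 1 + i + (K + 1) by omega] at hnext
    rw [← hnext]
    simp only [hwindow, add_mul, sum_add_distrib, ← mul_sum]
    rw [sum_range_succ' (fun j => downSum F (m + K) j * F (j + i)), downSum_zero, zero_mul,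
      add_zero, add_comm]
    congr 1
    · exact sum_congr rfl fun j _ => by rw [add_right_comm j 1 i, add_assoc]
    · simp only [add_comm i]

end

/-- With `S_ℓ(n) = ∑_{j=0}^{ℓ} F_k(n+k-2-j)`, the identity
`∑_{j=1}^{k} S_{k-j}(n) · F_k(k-j+i) = F_k(n+i+k-1)` holds for all `n ≥ k`, `i ≥ 0`. -/
theorem knacci_S_identity (k : ℕ) (hk : 2 ≤ k) (F : ℕ → ℕ)
    (hF0 : ∀ i, i < k - 1 → F i = 0) (hF1 : F (k - 1) = 1)
    (hFrec : ∀ n, F (n + k) = ∑ j ∈ Finset.range k, F (n + j))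
    (S : ℕ → ℕ → ℕ)
    (hS : ∀ ℓ n, S ℓ n = ∑ j ∈ Finset.range (ℓ + 1), F (n + k - 2 - j)) :
    ∀ n, k ≤ n → ∀ i : ℕ,
      (∑ j ∈ Finset.range k, S (k - 1 - j) n * F (k - 1 - j + i)) = F (n + i + k - 1) := by
  intro n hn i
  obtain ⟨m, rfl⟩ : ∃ m, n = m + 1 := ⟨n - 1, by omega⟩
  have hSdown : ∀ ℓ, S ℓ (m + 1) = downSum F (m + k - 1) (ℓ + 1) := fun ℓ => by
    rw [hS, downSum, show m + 1 + k - 2 = m + k - 1 by omega]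
  rw [sum_range_reflect (fun j => S j (m + 1) * F (j + i)) k, show m + 1 + i + k - 1 = m + i + k
    by omega, ← apply_add_add_eq_sum_downSum_mul hF0 hF1 hFrec m i]
  simp only [hSdown]
end

section
/- All roots of the polynomial 1 + x + ... + x^{k-1} - x^k other than the k-nacci constant φ_k lie strictly inside the unit circle in the complex plane, for k ≥ 2. -/
/-!
Multiplying `p` by `x - 1` turns a root `z` into a solution of `z ^ k * (2 - z) = 1`. If
`r = ‖z‖ ≥ 1`, the triangle inequality on `z ^ k = ∑_{i<k} z ^ i` gives `r ^ k * (2 - r) ≥ 1`,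
while taking norms gives `r ^ k * ‖2 - z‖ = 1`; hence `‖2 - z‖ ≤ 2 - ‖z‖`, which forces `z` to be
a nonnegative real. Finally `p` has only one positive root, because `p(x) / x ^ k` is strictly
decreasing on `(0, ∞)`.
-/

open Finset

theorem pow_mul_two_sub_eq_one_of_geom_sum_eq_pow {R : Type*} [CommRing R] {x : R} {k : ℕ}
    (hx : ∑ i ∈ range k, x ^ i = x ^ k) : x ^ k * (2 - x) = 1 := by
  linear_combination (x - 1) * hx - geom_sum_mul x k

section Ordered

variable {R : Type*} [CommRing R] [LinearOrder R] [IsStrictOrderedRing R]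

theorem one_le_pow_mul_two_sub_of_pow_le_geom_sum {r : R} {k : ℕ} (hr : 1 ≤ r)
    (h : r ^ k ≤ ∑ i ∈ range k, r ^ i) : 1 ≤ r ^ k * (2 - r) := by
  have := mul_le_mul_of_nonneg_right h (sub_nonneg.mpr hr)
  rw [geom_sum_mul] at this
  linarith

theorem geom_sum_mul_pow_lt {a b : R} {k : ℕ} (ha : 0 < a) (hab : a < b) (hk : k ≠ 0) :
    (∑ i ∈ range k, b ^ i) * a ^ k < (∑ i ∈ range k, a ^ i) * b ^ k := by
  simp only [sum_mul]
  refine sum_lt_sum_of_nonempty (nonempty_range_iff.mpr hk) fun i hi => ?_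
  obtain ⟨j, rfl⟩ := Nat.exists_eq_add_of_lt (mem_range.mp hi)
  have hj : a ^ (j + 1) < b ^ (j + 1) := pow_lt_pow_left₀ hab ha.le j.succ_ne_zero
  calc b ^ i * a ^ (i + j + 1) = (a * b) ^ i * a ^ (j + 1) := by ring
    _ < (a * b) ^ i * b ^ (j + 1) := by gcongr; exact pow_pos (mul_pos ha (ha.trans hab)) i
    _ = a ^ i * b ^ (i + j + 1) := by ring

theorem eq_of_geom_sum_eq_pow {a b : R} {k : ℕ} (ha : 0 < a) (hb : 0 < b)
    (hpa : ∑ i ∈ range k, a ^ i = a ^ k) (hpb : ∑ i ∈ range k, b ^ i = b ^ k) : a = b := by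
  have hk : k ≠ 0 := by
    rintro rfl
    simp at hpa
  have key {x y : R} (hx : 0 < x) (hxy : x < y) (hpx : ∑ i ∈ range k, x ^ i = x ^ k)
      (hpy : ∑ i ∈ range k, y ^ i = y ^ k) : False := by
    have := geom_sum_mul_pow_lt hx hxy hk
    rw [hpx, hpy, mul_comm] at this
    exact lt_irrefl _ this
  rcases lt_trichotomy a b with h | h | h
  · exact (key ha h hpa hpb).elim
  · exact h
  · exact (key hb h hpb hpa).elim

end Ordered

namespace Complex

open scoped ComplexOrder

theorem nonneg_of_norm_sub_le_sub_norm {c : ℝ} {z : ℂ} (h : ‖(c : ℂ) - z‖ ≤ c - ‖z‖) :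
    0 ≤ z := by
  have hre : c - z.re ≤ ‖(c : ℂ) - z‖ := by simpa using re_le_norm ((c : ℂ) - z)
  exact re_eq_norm.mp (le_antisymm (re_le_norm z) (by linarith))

theorem nonneg_of_geom_sum_eq_pow {z : ℂ} {k : ℕ} (hz : ∑ i ∈ range k, z ^ i = z ^ k)
    (h1 : 1 ≤ ‖z‖) : 0 ≤ z := by
  have hnorm : ‖z‖ ^ k * ‖2 - z‖ = 1 := by
    simpa using congrArg norm (pow_mul_two_sub_eq_one_of_geom_sum_eq_pow hz)
  have htri : ‖z‖ ^ k ≤ ∑ i ∈ range k, ‖z‖ ^ i :=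
    calc ‖z‖ ^ k = ‖∑ i ∈ range k, z ^ i‖ := by rw [hz, norm_pow]
      _ ≤ ∑ i ∈ range k, ‖z ^ i‖ := norm_sum_le _ _
      _ = ∑ i ∈ range k, ‖z‖ ^ i := by simp only [norm_pow]
  have hle : ‖z‖ ^ k * ‖2 - z‖ ≤ ‖z‖ ^ k * (2 - ‖z‖) :=
    hnorm.trans_le (one_le_pow_mul_two_sub_of_pow_le_geom_sum h1 htri)
  refine nonneg_of_norm_sub_le_sub_norm (c := 2) ?_
  exact_mod_cast le_of_mul_le_mul_left hle (by positivity)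

end Complex

theorem knacci_other_roots_in_unit_disc_general (k : ℕ)
    (φ : ℝ) (hφ : φ ∈ Set.Ioo (1 : ℝ) 2)
    (hroot : (∑ i ∈ Finset.range k, φ ^ i) - φ ^ k = 0) :
    ∀ z : ℂ, (∑ i ∈ Finset.range k, z ^ i) - z ^ k = 0 → z ≠ (φ : ℂ) →
      ‖z‖ < 1 := by
  intro z hz hne
  by_contra! h1
  have hz' : ∑ i ∈ range k, z ^ i = z ^ k := sub_eq_zero.mp hz
  have hnonneg := Complex.nonneg_of_geom_sum_eq_pow hz' h1
  have hzre : z = z.re := Complex.eq_re_of_ofReal_le hnonneg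
  have hre_pos : 0 < z.re := by
    rw [Complex.re_eq_norm.mpr hnonneg]
    linarith
  have hre_root : ∑ i ∈ range k, z.re ^ i = z.re ^ k := by
    rw [hzre] at hz'
    exact_mod_cast hz'
  have hre_eq : z.re = φ :=
    eq_of_geom_sum_eq_pow hre_pos (by linarith [hφ.1]) hre_root (sub_eq_zero.mp hroot)
  exact hne (by rw [hzre, hre_eq])

/-- All roots of `1 + x + ... + x^{k-1} - x^k` other than the k-nacci constant `φ_k`
lie strictly inside the unit circle in the complex plane, for `k ≥ 2`. -/
theorem knacci_other_roots_in_unit_disc (k : ℕ) (hk : 2 ≤ k)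
    (φ : ℝ) (hφ : φ ∈ Set.Ioo (1 : ℝ) 2)
    (hroot : (∑ i ∈ Finset.range k, φ ^ i) - φ ^ k = 0) :
    ∀ z : ℂ, (∑ i ∈ Finset.range k, z ^ i) - z ^ k = 0 → z ≠ (φ : ℂ) →
      ‖z‖ < 1 :=
  knacci_other_roots_in_unit_disc_general k φ hφ hroot
end

section
/- All complex roots of 1 + x + ... + x^{k-1} - x^k are simple (the polynomial is separable), for k ≥ 2. -/
/-!
Multiplying by `X - 1` turns `p` into `q = 2 X^k - X^(k+1) - 1`, and it suffices that `q` is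
separable. At a common root `a` of `q` and `q'`, the derivative forces `(k + 1) a = 2 k`, and
substituting into `q(a) = 0` gives `(k + 1)^(k + 1) = 2 (2k)^k = 2^(k + 1) k^k`. Then `k^k`
divides the coprime number `(k + 1)^(k + 1)`, so `k^k = 1`, which fails for `k ≥ 2`.
-/

open Polynomial Finset

theorem mul_geom_sum_sub_pow {R : Type*} [CommRing R] (x : R) (k : ℕ) :
    (x - 1) * (∑ i ∈ range k, x ^ i - x ^ k) = 2 * x ^ k - x ^ (k + 1) - 1 := by
  linear_combination mul_geom_sum x k

theorem Nat.two_mul_two_mul_pow_ne_succ_pow {k : ℕ} (hk : 2 ≤ k) :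
    2 * (2 * k) ^ k ≠ (k + 1) ^ (k + 1) := by
  intro h
  have hdvd : k ^ k ∣ (k + 1) ^ (k + 1) := ⟨2 ^ (k + 1), by rw [← h]; ring⟩
  have hcop : (k ^ k).Coprime ((k + 1) ^ (k + 1)) :=
    Nat.Coprime.pow _ _ (Nat.coprime_self_add_right.mpr (Nat.coprime_one_right k))
  rcases Nat.pow_eq_one.mp (hcop.eq_one_of_dvd hdvd) with h1 | h0 <;> omega

theorem succ_pow_eq_of_isRoot_of_isRoot_derivative {K : Type*} [Field K] {k : ℕ} {a : K}
    (hq : (2 * X ^ k - X ^ (k + 1) - 1 : K[X]).IsRoot a)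
    (hq' : (derivative (2 * X ^ k - X ^ (k + 1) - 1 : K[X])).IsRoot a) :
    ((k : K) + 1) ^ (k + 1) = 2 * (2 * k) ^ k := by
  cases k with
  | zero => simp at hq'
  | succ n =>
  simp only [IsRoot, eval_sub, eval_mul, eval_pow, eval_X, eval_one, eval_ofNat] at hq
  simp only [IsRoot, derivative_sub, derivative_mul, derivative_X_pow, derivative_one,
    derivative_ofNat, eval_sub, eval_mul, eval_pow, eval_X, eval_C, eval_ofNat, zero_mul,
    zero_add, sub_zero, Nat.add_sub_cancel] at hq'
  push_cast at hq' ⊢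
  have ha : a ^ n ≠ 0 := fun h => by simp [pow_succ, h] at hq
  have hlin : ((n : K) + 2) * a = 2 * (n + 1) := by
    have : a ^ n * (2 * (n + 1) - (n + 2) * a) = 0 := by linear_combination hq'
    linear_combination -(mul_eq_zero.mp this).resolve_left ha
  have hpow : ((n : K) + 2) ^ (n + 1) * a ^ (n + 1) = (2 * (n + 1)) ^ (n + 1) := by
    rw [← mul_pow, hlin]
  linear_combination -((n : K) + 2) ^ (n + 2) * hq + (2 * (n + 2) - 2 * (n + 1)) * hpow
    - ((n : K) + 2) ^ (n + 1) * a ^ (n + 1) * hlin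

theorem separable_two_mul_X_pow_sub_X_pow_succ_sub_one {F : Type*} [Field F] [CharZero F]
    {k : ℕ} (hk : 2 ≤ k) : (2 * X ^ k - X ^ (k + 1) - 1 : F[X]).Separable := by
  rw [← separable_map (algebraMap F (AlgebraicClosure F)), Separable,
    isCoprime_iff_aeval_ne_zero_of_isAlgClosed (AlgebraicClosure F) (AlgebraicClosure F)]
  intro a
  by_contra! hroot
  have hK := succ_pow_eq_of_isRoot_of_isRoot_derivative (k := k) (a := a)
    (by simpa using hroot.1) (by simpa using hroot.2)
  exact Nat.two_mul_two_mul_pow_ne_succ_pow hk (by exact_mod_cast hK.symm)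

open Polynomial in
/-- All complex roots of `1 + x + ... + x^{k-1} - x^k` are simple: the polynomial
is separable, for `k ≥ 2`. -/
theorem knacci_poly_separable (k : ℕ) (hk : 2 ≤ k) :
    ((∑ i ∈ Finset.range k, (X : Polynomial ℂ) ^ i) - X ^ k).Separable := by
  have hq : ((X - 1) * ((∑ i ∈ range k, X ^ i) - X ^ k) : ℂ[X]).Separable := by
    rw [mul_geom_sum_sub_pow]
    exact separable_two_mul_X_pow_sub_X_pow_succ_sub_one hk
  exact hq.of_mul_right
end

section
/- For k ≥ 2 and positive integers m, M with M = ⌊m/(φ_k − 1)⌋, there exists N such that for all i ≥ N, F_k(k+i)·M − (∑_{j=0}^{i} F_k(k−1+j))·m ≤ 0. -/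
/-!
Since `F n / φ ^ n → c`, the partial sums satisfy `(∑ j < n, F j) / φ ^ n → c / (φ - 1)`,
so after division by `φ ^ (k + i)` the expression tends to `c * (M - m / (φ - 1))`.
This limit is negative: `φ` is a non-integral root of the monic polynomial
`X ^ k - ∑ i < k, X ^ i`, hence irrational, so `m / (φ - 1)` is irrational
and its floor `M` lies strictly below it.
-/

open Filter Topology Finset Asymptotics Polynomial

theorem irrational_of_geom_sum_eq_pow {k : ℕ} {x : ℝ} (hx : ∀ n : ℤ, x ≠ n)
    (h : ∑ i ∈ range k, x ^ i = x ^ k) : Irrational x := by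
  rintro ⟨q, rfl⟩
  have hq : aeval q (X ^ k - ∑ i ∈ range k, X ^ i : ℤ[X]) = 0 := by
    simp only [map_sub, map_sum, map_pow, aeval_X, sub_eq_zero]
    exact_mod_cast h.symm
  have hmonic : (X ^ k - ∑ i ∈ range k, X ^ i : ℤ[X]).Monic := by
    refine monic_X_pow_sub <| (degree_sum_le _ _).trans_lt <|
      (Finset.sup_lt_iff (WithBot.bot_lt_coe k)).2 fun i hi => ?_
    rw [degree_X_pow]
    exact WithBot.coe_lt_coe.2 (mem_range.1 hi)
  obtain ⟨n, hn⟩ := isInteger_of_is_root_of_monic hmonic hq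
  exact hx n (by rw [← hn]; simp)

theorem tendsto_geom_sum_div_pow {r : ℝ} (hr : 1 < r) :
    Tendsto (fun n => (∑ j ∈ range n, r ^ j) / r ^ n) atTop (𝓝 (1 / (r - 1))) := by
  have h := ((tendsto_inv_atTop_zero.comp (tendsto_pow_atTop_atTop_of_one_lt hr)).const_sub
    1).div_const (r - 1)
  rw [sub_zero] at h
  refine h.congr fun n => ?_
  rw [geom_sum_eq hr.ne', Function.comp_apply]
  field_simp

theorem tendsto_sum_range_div_pow {a : ℕ → ℝ} {r c : ℝ} (hr : 1 < r)
    (ha : Tendsto (fun n => a n / r ^ n) atTop (𝓝 c)) :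
    Tendsto (fun n => (∑ j ∈ range n, a j) / r ^ n) atTop (𝓝 (c / (r - 1))) := by
  have hpow_ne (n : ℕ) : r ^ n ≠ 0 := pow_ne_zero n (zero_lt_one.trans hr).ne'
  have hgeom := tendsto_geom_sum_div_pow hr
  have herr : (fun n => a n - c * r ^ n) =o[atTop] fun n => r ^ n := by
    rw [isLittleO_iff_tendsto fun n h => absurd h (hpow_ne n)]
    simpa [sub_div, mul_div_assoc, div_self (hpow_ne _)] using ha.sub_const c
  have hgeom_atTop : Tendsto (fun n => ∑ j ∈ range n, r ^ j) atTop atTop :=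
    (Tendsto.pos_mul_atTop (one_div_pos.2 (sub_pos.2 hr)) hgeom
      (tendsto_pow_atTop_atTop_of_one_lt hr)).congr fun n => div_mul_cancel₀ _ (hpow_ne n)
  have hgeom_isBigO : (fun n => ∑ j ∈ range n, r ^ j) =O[atTop] fun n => r ^ n :=
    isBigO_of_div_tendsto_nhds (.of_forall fun n h => absurd h (hpow_ne n)) _ hgeom
  have hsum_err := ((herr.sum_range (fun n => (pow_pos (zero_lt_one.trans hr) n).le)
    hgeom_atTop).trans_isBigO hgeom_isBigO).tendsto_div_nhds_zero
  have h := hsum_err.add (hgeom.const_mul c)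
  rw [zero_add, mul_one_div] at h
  refine h.congr fun n => ?_
  simp only [sum_sub_distrib, ← mul_sum]
  ring

theorem row_one_checkers_eventually_nonpos_general (k : ℕ) (hk : 2 ≤ k) (F : ℕ → ℕ)
    (φ : ℝ) (hφ : φ ∈ Set.Ioo (1 : ℝ) 2)
    (hroot : ∑ i ∈ Finset.range k, φ ^ i = φ ^ k)
    (hasymp : ∃ c : ℝ, 0 < c ∧
      Filter.Tendsto (fun n => (F n : ℝ) / φ ^ n) Filter.atTop (nhds c))
    (m M : ℕ) (hm : 0 < m) (hMdef : M = ⌊(m : ℝ) / (φ - 1)⌋₊) :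
    ∃ N : ℕ, ∀ i, N ≤ i →
      (F (k + i) : ℝ) * M - (∑ j ∈ Finset.range (i + 1), (F (k - 1 + j) : ℝ)) * m ≤ 0 := by
  obtain ⟨hφ1, hφ2⟩ := hφ
  obtain ⟨c, hc, hF⟩ := hasymp
  have hφ_irr : Irrational φ := by
    refine irrational_of_geom_sum_eq_pow (fun n hn => ?_) hroot
    have h1 : (1 : ℤ) < n := by exact_mod_cast hn ▸ hφ1
    have h2 : n < 2 := by exact_mod_cast hn ▸ hφ2
    omega
  have hgap : (M : ℝ) < m / (φ - 1) := by
    have hirr : Irrational ((m : ℝ) / (φ - 1)) := by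
      simpa using (hφ_irr.sub_natCast 1).natCast_div hm.ne'
    exact hMdef ▸ (Nat.floor_le (by positivity)).lt_of_ne (hirr.ne_nat _).symm
  set C := ∑ j ∈ range (k - 1), (F j : ℝ)
  have hlim : Tendsto (fun n => ((F n : ℝ) * M - (∑ j ∈ range n, (F j : ℝ) - C) * m) / φ ^ n)
      atTop (𝓝 (c * (M - m / (φ - 1)))) := by
    have hC := tendsto_const_nhds (x := C) |>.div_atTop (tendsto_pow_atTop_atTop_of_one_lt hφ1)
    convert (hF.mul_const (M : ℝ)).sub
      (((tendsto_sum_range_div_pow hφ1 hF).sub hC).mul_const (m : ℝ)) using 1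
    · ext n
      ring
    · congr 1
      ring
  obtain ⟨N, hN⟩ := eventually_atTop.1
    (hlim.eventually (gt_mem_nhds (mul_neg_of_pos_of_neg hc (sub_neg.2 hgap))))
  refine ⟨N, fun i hi => ?_⟩
  have hsplit :
      ∑ j ∈ range (i + 1), (F (k - 1 + j) : ℝ) = ∑ j ∈ range (k + i), (F j : ℝ) - C := by
    rw [show k + i = k - 1 + (i + 1) by omega, sum_range_add _ (k - 1) (i + 1)]
    ring
  have h := hN (k + i) (by omega)
  rw [div_lt_iff₀ (pow_pos (by linarith) _), zero_mul, ← hsplit] at h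
  exact h.le

/-- For `k ≥ 2` and positive integers `m, M` with `M = ⌊m/(φ_k − 1)⌋`, there exists
`N` such that for all `i ≥ N`, `F_k(k+i)·M − (∑_{j=0}^{i} F_k(k−1+j))·m ≤ 0`. -/
theorem row_one_checkers_eventually_nonpos (k : ℕ) (hk : 2 ≤ k) (F : ℕ → ℕ)
    (hF0 : ∀ i, i < k - 1 → F i = 0) (hF1 : F (k - 1) = 1)
    (hFrec : ∀ n, F (n + k) = ∑ j ∈ Finset.range k, F (n + j))
    (φ : ℝ) (hφ : φ ∈ Set.Ioo (1 : ℝ) 2)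
    (hroot : ∑ i ∈ Finset.range k, φ ^ i = φ ^ k)
    (hasymp : ∃ c : ℝ, 0 < c ∧
      Filter.Tendsto (fun n => (F n : ℝ) / φ ^ n) Filter.atTop (nhds c))
    (m M : ℕ) (hm : 0 < m) (hM : 0 < M) (hMdef : M = ⌊(m : ℝ) / (φ - 1)⌋₊) :
    ∃ N : ℕ, ∀ i, N ≤ i →
      (F (k + i) : ℝ) * M - (∑ j ∈ Finset.range (i + 1), (F (k - 1 + j) : ℝ)) * m ≤ 0 :=
  row_one_checkers_eventually_nonpos_general k hk F φ hφ hroot hasymp m M hm hMdef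
end
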